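/- Let m = C > n+1. If Φ is the C × m ReLU interpolation matrix of a three-layer network on C data points and there exist k ≥ n+2 columns of Φ all of whose entries are strictly positive, then Φ is singular. Hence a necessary condition for Φ to be nonsingular is that no n+2 columns of Φ are entirely positive. -/

import Mathlib

/-! On an entirely positive column the ReLU acts as the identity, so that column is the image of
`λ_ν` under the linear map `λ ↦ (λ · z_k)_k` out of `ℝ^(n+1)`. Hence `n + 2` such columns lie in a
space of dimension at most `n + 1` and are linearly dependent. -/

open Matrix

theorem Matrix.det_eq_zero_of_col_mem_of_finrank_lt {K ι : Type*} [Field K] [Fintype ι]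
    [DecidableEq ι] (A : Matrix ι ι K) (W : Submodule K (ι → K)) (S : Finset ι)
    (hW : Module.finrank K W < S.card) (hA : ∀ ν ∈ S, A.col ν ∈ W) : A.det = 0 := by
  by_contra hdet
  have hS : LinearIndependent K (fun ν : S ↦ A.col ν) :=
    (linearIndependent_cols_of_det_ne_zero hdet).comp _ Subtype.val_injective
  have hSW : LinearIndependent K (fun ν : S ↦ (⟨A.col ν, hA ν ν.2⟩ : W)) :=
    LinearIndependent.of_comp W.subtype hS
  have := hSW.fintype_card_le_finrank
  simp only [Fintype.card_coe] at this
  omega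

theorem relu_col_mem_range_of_pos {ι κ d : Type*} [Fintype d] (lam : ι → d → ℝ)
    (z : κ → d → ℝ) (Φ : Matrix κ ι ℝ) (hΦ : ∀ k ν, Φ k ν = max 0 (lam ν ⬝ᵥ z k))
    (ν : ι) (hpos : ∀ k, 0 < lam ν ⬝ᵥ z k) :
    Φ.col ν ∈ LinearMap.range (Matrix.of z).mulVecLin := by
  refine ⟨lam ν, funext fun k ↦ ?_⟩
  rw [col_apply, hΦ, max_eq_right (hpos k).le, mulVecLin_apply, mulVec, dotProduct_comm]
  rfl

theorem stmt_1_general (n m : ℕ)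
    (lam z : Fin m → (Fin (n + 1) → ℝ))
    (Φ : Matrix (Fin m) (Fin m) ℝ)
    (hΦ : ∀ k ν, Φ k ν = max 0 (lam ν ⬝ᵥ z k))
    (S : Finset (Fin m)) (hS : n + 2 ≤ S.card)
    (hpos : ∀ ν ∈ S, ∀ k, 0 < lam ν ⬝ᵥ z k) :
    Φ.det = 0 := by
  have hrank : Module.finrank ℝ (LinearMap.range (Matrix.of z).mulVecLin) < S.card :=
    calc _ ≤ Module.finrank ℝ (Fin (n + 1) → ℝ) := LinearMap.finrank_range_le _
      _ = n + 1 := Module.finrank_fin_fun ℝ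
      _ < S.card := hS
  exact Φ.det_eq_zero_of_col_mem_of_finrank_lt _ S hrank fun ν hν ↦
    relu_col_mem_range_of_pos lam z Φ hΦ ν (hpos ν hν)

theorem stmt_1 (n m : ℕ) (hm : m > n + 1)
    (lam z : Fin m → (Fin (n + 1) → ℝ))
    (Φ : Matrix (Fin m) (Fin m) ℝ)
    (hΦ : ∀ k ν, Φ k ν = max 0 (lam ν ⬝ᵥ z k))
    (S : Finset (Fin m)) (hS : n + 2 ≤ S.card)
    (hpos : ∀ ν ∈ S, ∀ k, 0 < lam ν ⬝ᵥ z k) :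
    Φ.det = 0 :=
  stmt_1_general n m lam z Φ hΦ S hS hpos
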